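/- arXiv:2007.10674 — 7 statements merged into one kernel-verified Lean document; each statement's English description precedes it below -/
import Mathlib

section
/- The eigenvalues of the n×n matrix M with M(1,1)=n+1, M(1,j)=M(j,1)=-1 for j≥2, M(j,j)=3 for j≥2, and all other entries 0, are {2, 3 (with multiplicity n-2), n+2}. -/
/-!
`M` is the arrowhead matrix with corner `n + 1`, border `-1` and diagonal `3`, so its
characteristic matrix is again an arrowhead matrix, with corner `X - (n + 1)`, border `1` and
diagonal `X - 3`. An arrowhead matrix of size `k + 1` with corner `a`, border `c` and
diagonal `d` has determinant `(a d - k c²) d^(k-1)`, and here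
`(X - (n + 1)) (X - 3) - (n - 1) = (X - 2) (X - (n + 2))`.
-/

open Polynomial

namespace Matrix

variable {R : Type*} [CommRing R]

def arrowhead (k : ℕ) (a c d : R) : Matrix (Fin (k + 1)) (Fin (k + 1)) R :=
  of fun i j => if i = j then (if i = 0 then a else d) else if i = 0 ∨ j = 0 then c else 0

theorem det_arrowhead_mul (k : ℕ) (a c d : R) :
    d * (arrowhead k a c d).det = (a * d - k * c ^ 2) * d ^ k := by
  -- Replacing row `0` by `d • row 0 - c • (row 1 + ⋯ + row k)` clears the border of row `0`.
  let E : Matrix (Fin (k + 1)) (Fin (k + 1)) R :=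
    of fun i j => if i = 0 then (if j = 0 then d else -c) else if i = j then 1 else 0
  let L : Matrix (Fin (k + 1)) (Fin (k + 1)) R :=
    of fun i j => if i = j then (if i = 0 then a * d - k * c ^ 2 else d)
      else if j = 0 then c else 0
  have hEL : E * arrowhead k a c d = L := by
    ext i j
    induction i using Fin.cases <;> induction j using Fin.cases <;>
      simp [E, L, arrowhead, mul_apply, Fin.sum_univ_succ, Fin.succ_ne_zero,
        eq_comm (a := (0 : Fin _))] <;>
      ring
  have hE : E.det = d := by
    rw [det_of_isUpperTriangular]
    · simp [E]
    · intro i j (hji : j < i)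
      simp [E, hji.ne', Fin.ne_zero_of_lt hji]
  have hL : L.det = (a * d - k * c ^ 2) * d ^ k := by
    rw [det_of_isLowerTriangular]
    · simp [L, Fin.prod_univ_succ]
    · intro i j (hij : i < j)
      simp [L, hij.ne, Fin.ne_zero_of_lt hij]
  rw [← hL, ← hEL, det_mul, hE]

theorem det_arrowhead [IsDomain R] (k : ℕ) (a c : R) {d : R} (hd : d ≠ 0) :
    (arrowhead (k + 1) a c d).det = (a * d - (k + 1) * c ^ 2) * d ^ k :=
  mul_left_cancel₀ hd <| by rw [det_arrowhead_mul]; push_cast; ring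

theorem charmatrix_arrowhead (k : ℕ) (a c d : R) :
    charmatrix (arrowhead k a c d) = arrowhead k (X - C a) (-C c) (X - C d) := by
  ext i j
  by_cases hij : i = j
  · subst hij
    by_cases hi : i = 0 <;> simp [arrowhead, hi]
  · by_cases h : i = 0 ∨ j = 0 <;> simp [arrowhead, hij, h]

theorem charpoly_arrowhead [IsDomain R] (k : ℕ) (a c d : R) :
    (arrowhead (k + 1) a c d).charpoly =
      ((X - C a) * (X - C d) - ((k : R[X]) + 1) * C c ^ 2) * (X - C d) ^ k := by
  rw [charpoly, charmatrix_arrowhead, det_arrowhead _ _ _ (X_sub_C_ne_zero d), neg_sq]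

end Matrix

/-- The spectrum of the arrowhead matrix `L_S(S_n^2)`, with `M 0 0 = n+1`,
`M 0 j = M j 0 = -1` for `j ≠ 0`, `M j j = 3` for `j ≠ 0` and other entries `0`,
is `{2, 3^(n-2), n+2}` (stated via its characteristic polynomial). -/
theorem spectrum_LS (n : ℕ) (hn : 2 ≤ n)
    (M : Matrix (Fin n) (Fin n) ℝ)
    (hM : M = Matrix.of fun i j =>
      if i = j then (if i.val = 0 then (n : ℝ) + 1 else 3)
      else if i.val = 0 ∨ j.val = 0 then -1 else 0) :
    M.charpoly = (X - 2) * (X - 3) ^ (n - 2) * (X - C ((n : ℝ) + 2)) := by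
  obtain ⟨k, rfl⟩ : ∃ k, n = k + 2 := ⟨n - 2, by omega⟩
  have hM' : M = Matrix.arrowhead (k + 1) ((k + 2 : ℕ) + 1 : ℝ) (-1) 3 := by
    simp only [hM, Matrix.arrowhead, Fin.val_eq_zero_iff]
  rw [hM', Matrix.charpoly_arrowhead, Nat.add_sub_cancel]
  simp only [map_add, map_natCast, map_neg, map_one, map_ofNat]
  push_cast
  ring
end

section
/- The Kirchhoff index of S_n × K_2 equals (8n³ + 3n² - 14n + 12)/(3n + 6). -/
open Polynomial

/-- `S_n × K_2` on vertex set `Fin n × Fin 2` (star center: first coordinate `0`). -/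
def snK2 (n : ℕ) : SimpleGraph (Fin n × Fin 2) :=
  SimpleGraph.fromRel (fun p q => (p.2 = q.2 ∧ (p.1.val = 0 ∨ q.1.val = 0)) ∨ p.1 = q.1)

instance (n : ℕ) : DecidableRel (snK2 n).Adj := by
  unfold snK2
  exact fun p q => decidable_of_iff _ (SimpleGraph.fromRel_adj _ p q).symm

namespace SnK2Aux

open Matrix

lemma fin_val_eq_zero {k : ℕ} (a : Fin (k+1)) : a.val = 0 ↔ a = 0 := by
  rw [Fin.ext_iff]; simp

lemma snK2_adj {n : ℕ} (p q : Fin n × Fin 2) :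
    (snK2 n).Adj p q ↔ p ≠ q ∧ ((p.2 = q.2 ∧ (p.1.val = 0 ∨ q.1.val = 0)) ∨ p.1 = q.1) := by
  rw [snK2, SimpleGraph.fromRel_adj]
  refine and_congr_right fun _ => ⟨fun h => ?_, fun h => Or.inl h⟩
  rcases h with h | h
  · exact h
  · rcases h with ⟨h1, h2⟩ | h1
    · exact Or.inl ⟨h1.symm, h2.symm⟩
    · exact Or.inr h1.symm

lemma snK2_adj' {m : ℕ} (a c : Fin (m+2)) (b d : Fin 2) :
    (snK2 (m+2)).Adj (a, b) (c, d) ↔ ((b = d ∧ (a = 0 ∨ c = 0)) ∨ a = c) ∧ (a, b) ≠ (c, d) := by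
  rw [snK2_adj]
  simp only [fin_val_eq_zero, ne_eq, Prod.mk.injEq, not_and]
  tauto

lemma adj_center {m : ℕ} (s : Fin 2) (a : Fin (m+2)) (b : Fin 2) :
    (snK2 (m+2)).Adj (0, s) (a, b) ↔ ((b = s ∧ a ≠ 0) ∨ (a = 0 ∧ b ≠ s)) := by
  rw [snK2_adj']
  rcases eq_or_ne a 0 with rfl | ha <;> rcases eq_or_ne b s with rfl | hb <;>
    simp_all [Prod.ext_iff, eq_comm]

lemma adj_leaf {m : ℕ} (k : Fin (m+1)) (s : Fin 2) (a : Fin (m+2)) (b : Fin 2) :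
    (snK2 (m+2)).Adj (k.succ, s) (a, b) ↔ ((b = s ∧ a = 0) ∨ (a = k.succ ∧ b ≠ s)) := by
  rw [snK2_adj']
  rcases eq_or_ne a k.succ with rfl | ha <;> rcases eq_or_ne b s with rfl | hb <;>
    simp_all [Prod.ext_iff, eq_comm, Fin.succ_ne_zero]

lemma deg_center (m : ℕ) (s : Fin 2) : (snK2 (m+2)).degree (0, s) = m + 2 := by
  rw [SimpleGraph.degree, SimpleGraph.neighborFinset_eq_filter, Finset.card_filter,
    Fintype.sum_prod_type]
  have key : ∀ a : Fin (m+2),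
      (∑ b : Fin 2, if (snK2 (m+2)).Adj (0, s) (a, b) then (1:ℕ) else 0) = 1 := by
    intro a
    rcases eq_or_ne a 0 with rfl | ha
    · have h1 : ∀ b : Fin 2, (snK2 (m+2)).Adj (0, s) (0, b) ↔ b ≠ s := by
        intro b; rw [adj_center]; simp
      simp only [h1]; fin_cases s <;> decide
    · have h1 : ∀ b : Fin 2, (snK2 (m+2)).Adj (0, s) (a, b) ↔ b = s := by
        intro b; rw [adj_center]; simp [ha]
      simp only [h1]; fin_cases s <;> decide
  simp only [key, Finset.sum_const, Finset.card_univ, Fintype.card_fin, smul_eq_mul, mul_one]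

lemma deg_leaf (m : ℕ) (k : Fin (m+1)) (s : Fin 2) : (snK2 (m+2)).degree (k.succ, s) = 2 := by
  rw [SimpleGraph.degree, SimpleGraph.neighborFinset_eq_filter, Finset.card_filter,
    Fintype.sum_prod_type]
  have key : ∀ a : Fin (m+2),
      (∑ b : Fin 2, if (snK2 (m+2)).Adj (k.succ, s) (a, b) then (1:ℕ) else 0)
        = (if a = 0 ∨ a = k.succ then 1 else 0) := by
    intro a
    rcases eq_or_ne a 0 with rfl | ha
    · have h1 : ∀ b : Fin 2, (snK2 (m+2)).Adj (k.succ, s) (0, b) ↔ b = s := by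
        intro b; rw [adj_leaf]; simp [(Fin.succ_ne_zero k).symm, Ne.symm (Fin.succ_ne_zero k)]
      simp only [h1, true_or, or_true, if_true]
      fin_cases s <;> decide
    · rcases eq_or_ne a k.succ with rfl | ha2
      · have h1 : ∀ b : Fin 2, (snK2 (m+2)).Adj (k.succ, s) (k.succ, b) ↔ b ≠ s := by
          intro b; rw [adj_leaf]; simp [Fin.succ_ne_zero]
        simp only [h1, true_or, or_true, if_true]
        fin_cases s <;> decide
      · have h1 : ∀ b : Fin 2, ¬ (snK2 (m+2)).Adj (k.succ, s) (a, b) := by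
          intro b; rw [adj_leaf]; simp [ha, ha2]
        simp only [h1, if_neg (by tauto : ¬(a = 0 ∨ a = k.succ)), if_false]
        decide
  simp only [key]
  have h2 : (∑ x : Fin (m+2), if x = 0 ∨ x = k.succ then (1:ℕ) else 0)
      = ∑ x : Fin (m+2), if x ∈ ({0, k.succ} : Finset (Fin (m+2))) then (1:ℕ) else 0 := by
    simp [Finset.mem_insert]
  rw [h2, Finset.sum_ite_mem, Finset.univ_inter, Finset.sum_const, smul_eq_mul, mul_one,
    Finset.card_insert_of_notMem (by simp [(Fin.succ_ne_zero k).symm, Ne.symm (Fin.succ_ne_zero k)]),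
    Finset.card_singleton]

def vmap (m : ℕ) : (Fin 1 ⊕ Fin (m+1)) ⊕ (Fin 1 ⊕ Fin (m+1)) → Fin (m+2) × Fin 2
  | .inl (.inl _) => (0, 0)
  | .inl (.inr k) => (k.succ, 0)
  | .inr (.inl _) => (0, 1)
  | .inr (.inr k) => (k.succ, 1)

def vEquiv (m : ℕ) : ((Fin 1 ⊕ Fin (m+1)) ⊕ (Fin 1 ⊕ Fin (m+1))) ≃ (Fin (m+2) × Fin 2) where
  toFun := vmap m
  invFun p := (fun t => if p.2 = 0 then Sum.inl t else Sum.inr t)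
      (Fin.cases (Sum.inl 0) (fun k => Sum.inr k) p.1)
  left_inv := by
    rintro ((i | k) | (i | k))
    · simp [vmap, Subsingleton.elim (0 : Fin 1) i]
    · simp [vmap]
    · simp [vmap, Subsingleton.elim (0 : Fin 1) i]
    · simp [vmap]
  right_inv := by
    rintro ⟨i, s⟩
    induction i using Fin.cases <;> fin_cases s <;> simp [vmap]

noncomputable section

/-- arrowhead determinant -/
lemma arrow_det (m : ℕ) (a d : ℝ) (hd : d ≠ 0) :
    (fromBlocks (a • (1 : Matrix (Fin 1) (Fin 1) ℝ)) (Matrix.of fun _ _ => (1:ℝ))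
      (Matrix.of fun _ _ => (1:ℝ)) (d • (1 : Matrix (Fin (m+1)) (Fin (m+1)) ℝ))).det
      = d ^ m * (d * a - (m+1)) := by
  have hmul : (d • (1 : Matrix (Fin (m+1)) (Fin (m+1)) ℝ)) * (d⁻¹ • 1) = 1 := by
    rw [Matrix.smul_mul, Matrix.mul_smul, smul_smul, mul_inv_cancel₀ hd, one_mul, one_smul]
  haveI : Invertible (d • (1 : Matrix (Fin (m+1)) (Fin (m+1)) ℝ)) :=
    invertibleOfRightInverse _ _ hmul
  have hinv : (⅟(d • (1 : Matrix (Fin (m+1)) (Fin (m+1)) ℝ)) : Matrix _ _ ℝ) = d⁻¹ • 1 :=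
    invOf_eq_right_inv hmul
  rw [det_fromBlocks₂₂, hinv, det_smul, det_one, Fintype.card_fin, mul_one]
  have h11 : (a • (1 : Matrix (Fin 1) (Fin 1) ℝ) -
      Matrix.of (fun (_ : Fin 1) (_ : Fin (m+1)) => (1:ℝ)) *
        (d⁻¹ • (1 : Matrix (Fin (m+1)) (Fin (m+1)) ℝ)) *
        Matrix.of (fun (_ : Fin (m+1)) (_ : Fin 1) => (1:ℝ))).det
      = a - (m+1) * d⁻¹ := by
    rw [Matrix.mul_smul, Matrix.mul_one, Matrix.smul_mul, det_fin_one]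
    rw [Matrix.sub_apply, Matrix.smul_apply, Matrix.smul_apply, Matrix.one_apply_eq,
      Matrix.mul_apply]
    simp [Finset.sum_const, Finset.card_univ, smul_eq_mul]
    ring
  rw [h11, pow_succ]
  field_simp

/-- the basic arrowhead block -/
def A2 (m : ℕ) (a d : ℝ) : Matrix (Fin 1 ⊕ Fin (m+1)) (Fin 1 ⊕ Fin (m+1)) ℝ :=
  fromBlocks (a • 1) (Matrix.of fun _ _ => 1) (Matrix.of fun _ _ => 1) (d • 1)

lemma A2_det (m : ℕ) (a d : ℝ) (hd : d ≠ 0) :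
    (A2 m a d).det = d ^ m * (d * a - (m+1)) := arrow_det m a d hd

lemma A2_sub_one (m : ℕ) (a d : ℝ) : A2 m a d - 1 = A2 m (a-1) (d-1) := by
  ext (i | k) (j | l) <;>
    simp [A2, Matrix.one_apply, Matrix.sub_apply, sub_smul, Matrix.smul_apply] <;>
    split_ifs <;> simp

lemma A2_add_one (m : ℕ) (a d : ℝ) : A2 m a d + 1 = A2 m (a+1) (d+1) := by
  ext (i | k) (j | l) <;>
    simp [A2, Matrix.one_apply, Matrix.add_apply, add_smul, Matrix.smul_apply] <;>
    split_ifs <;> simp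

/-- determinant of the double-arrow block matrix, for invertible middle block -/
lemma double_det (m : ℕ) (B : Matrix (Fin 1 ⊕ Fin (m+1)) (Fin 1 ⊕ Fin (m+1)) ℝ)
    (hB : B.det ≠ 0) :
    (fromBlocks B 1 1 B).det = (B - 1).det * (B + 1).det := by
  haveI : Invertible B := B.invertibleOfIsUnitDet (isUnit_iff_ne_zero.2 hB)
  rw [det_fromBlocks₂₂, Matrix.one_mul, Matrix.mul_one]
  rw [← det_mul, Matrix.mul_sub, mul_invOf_self, ← det_mul]
  congr 1
  rw [Matrix.sub_mul, Matrix.mul_add, Matrix.mul_add, Matrix.one_mul, Matrix.mul_one,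
    Matrix.one_mul]
  abel

variable {m : ℕ}

lemma lap_entry (v w : Fin (m+2) × Fin 2) :
    (snK2 (m+2)).lapMatrix ℝ v w
      = (if v = w then ((snK2 (m+2)).degree v : ℝ) else 0)
        - (if (snK2 (m+2)).Adj v w then 1 else 0) := by
  simp [SimpleGraph.lapMatrix, SimpleGraph.degMatrix, SimpleGraph.adjMatrix, Matrix.diagonal]

lemma rsub_diag (r : ℝ) (v : Fin (m+2) × Fin 2) :
    (r • (1 : Matrix (Fin (m+2) × Fin 2) (Fin (m+2) × Fin 2) ℝ) - (snK2 (m+2)).lapMatrix ℝ) v v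
      = r - ((snK2 (m+2)).degree v : ℝ) := by
  rw [Matrix.sub_apply, Matrix.smul_apply, Matrix.one_apply_eq, lap_entry]
  simp [(snK2 (m+2)).irrefl]

lemma rsub_adj (r : ℝ) {v w : Fin (m+2) × Fin 2} (h : (snK2 (m+2)).Adj v w) :
    (r • (1 : Matrix (Fin (m+2) × Fin 2) (Fin (m+2) × Fin 2) ℝ) - (snK2 (m+2)).lapMatrix ℝ) v w
      = 1 := by
  rw [Matrix.sub_apply, Matrix.smul_apply, Matrix.one_apply_ne h.ne, lap_entry]
  simp [h, h.ne]

lemma rsub_nadj (r : ℝ) {v w : Fin (m+2) × Fin 2} (hne : v ≠ w)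
    (h : ¬ (snK2 (m+2)).Adj v w) :
    (r • (1 : Matrix (Fin (m+2) × Fin 2) (Fin (m+2) × Fin 2) ℝ) - (snK2 (m+2)).lapMatrix ℝ) v w
      = 0 := by
  rw [Matrix.sub_apply, Matrix.smul_apply, Matrix.one_apply_ne hne, lap_entry]
  simp [h, hne]

lemma key (m : ℕ) (r : ℝ) :
    ((r • (1 : Matrix (Fin (m+2) × Fin 2) (Fin (m+2) × Fin 2) ℝ)
        - (snK2 (m+2)).lapMatrix ℝ)).submatrix (vEquiv m) (vEquiv m)
      = fromBlocks (A2 m (r - ((m:ℝ)+2)) (r-2)) 1 1 (A2 m (r - ((m:ℝ)+2)) (r-2)) := by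
  have hc : ((m+2 : ℕ) : ℝ) = (m:ℝ)+2 := by push_cast; ring
  have hsz : ∀ k : Fin (m+1), (k.succ : Fin (m+2)) ≠ 0 := Fin.succ_ne_zero
  have hadj01 : ∀ s t : Fin 2, s ≠ t → (snK2 (m+2)).Adj (0, s) (0, t) := by
    intro s t hst
    rw [snK2_adj']
    exact ⟨Or.inr rfl, by simp [Prod.ext_iff, hst]⟩
  have hadjcl : ∀ (k : Fin (m+1)) (s : Fin 2), (snK2 (m+2)).Adj (0, s) (k.succ, s) := by
    intro k s
    rw [adj_center]
    exact Or.inl ⟨rfl, hsz k⟩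
  have hadjlc : ∀ (k : Fin (m+1)) (s : Fin 2), (snK2 (m+2)).Adj (k.succ, s) (0, s) := by
    intro k s; exact (hadjcl k s).symm
  have hadjll : ∀ (k : Fin (m+1)) (s t : Fin 2), s ≠ t →
      (snK2 (m+2)).Adj (k.succ, s) (k.succ, t) := by
    intro k s t hst
    rw [adj_leaf]
    exact Or.inr ⟨rfl, fun h => hst h.symm⟩
  have hnadjcl : ∀ (k : Fin (m+1)) (s t : Fin 2), s ≠ t →
      ¬ (snK2 (m+2)).Adj (0, s) (k.succ, t) := by
    intro k s t hst
    rw [adj_center]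
    rintro (⟨h1, -⟩ | ⟨h1, -⟩)
    · exact hst h1.symm
    · exact hsz k h1
  have hnadjlc : ∀ (k : Fin (m+1)) (s t : Fin 2), s ≠ t →
      ¬ (snK2 (m+2)).Adj (k.succ, s) (0, t) := by
    intro k s t hst h
    exact hnadjcl k t s (Ne.symm hst) h.symm
  have hnadjll : ∀ (k l : Fin (m+1)) (s t : Fin 2), k ≠ l →
      ¬ (snK2 (m+2)).Adj (k.succ, s) (l.succ, t) := by
    intro k l s t hkl
    rw [adj_leaf]
    rintro (⟨-, h1⟩ | ⟨h1, -⟩)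
    · exact hsz l h1
    · exact hkl (Fin.succ_injective _ h1).symm
  have hnell : ∀ (k l : Fin (m+1)) (s t : Fin 2), k ≠ l →
      ((k.succ : Fin (m+2)), s) ≠ (l.succ, t) := by
    intro k l s t hkl
    exact fun h => hkl (Fin.succ_injective _ (congrArg Prod.fst h))
  ext i j
  rcases i with (i | k) | (i | k) <;> rcases j with (j | l) | (j | l) <;>
    simp only [Matrix.submatrix_apply, vEquiv, Equiv.coe_fn_mk, vmap,
      fromBlocks_apply₁₁, fromBlocks_apply₁₂, fromBlocks_apply₂₁, fromBlocks_apply₂₂, A2]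
  · rw [rsub_diag, deg_center, hc]
    simp [Matrix.one_apply, Subsingleton.elim i j]
  · rw [rsub_adj r (hadjcl l 0)]
    simp
  · rw [rsub_adj r (hadj01 0 1 (by decide))]
    simp [Matrix.one_apply, Subsingleton.elim i j]
  · rw [rsub_nadj r (by simp [Prod.ext_iff, (hsz l).symm]) (hnadjcl l 0 1 (by decide))]
    simp [Matrix.one_apply]
  · rw [rsub_adj r (hadjlc k 0)]
    simp
  · rcases eq_or_ne k l with rfl | hkl
    · rw [rsub_diag, deg_leaf]
      simp [Matrix.one_apply]
    · rw [rsub_nadj r (hnell k l 0 0 hkl) (hnadjll k l 0 0 hkl)]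
      simp [Matrix.one_apply, hkl]
  · rw [rsub_nadj r (by simp [Prod.ext_iff, hsz k]) (hnadjlc k 0 1 (by decide))]
    simp [Matrix.one_apply]
  · rcases eq_or_ne k l with rfl | hkl
    · rw [rsub_adj r (hadjll k 0 1 (by decide))]
      simp [Matrix.one_apply]
    · rw [rsub_nadj r (hnell k l 0 1 hkl) (hnadjll k l 0 1 hkl)]
      simp [Matrix.one_apply, hkl]
  · rw [rsub_adj r (hadj01 1 0 (by decide))]
    simp [Matrix.one_apply, Subsingleton.elim i j]
  · rw [rsub_nadj r (by simp [Prod.ext_iff, (hsz l).symm]) (hnadjcl l 1 0 (by decide))]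
    simp [Matrix.one_apply]
  · rw [rsub_diag, deg_center, hc]
    simp [Matrix.one_apply, Subsingleton.elim i j]
  · rw [rsub_adj r (hadjcl l 1)]
    simp
  · rw [rsub_nadj r (by simp [Prod.ext_iff, hsz k]) (hnadjlc k 1 0 (by decide))]
    simp [Matrix.one_apply]
  · rcases eq_or_ne k l with rfl | hkl
    · rw [rsub_adj r (hadjll k 1 0 (by decide))]
      simp [Matrix.one_apply]
    · rw [rsub_nadj r (hnell k l 1 0 hkl) (hnadjll k l 1 0 hkl)]
      simp [Matrix.one_apply, hkl]
  · rw [rsub_adj r (hadjlc k 1)]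
    simp
  · rcases eq_or_ne k l with rfl | hkl
    · rw [rsub_diag, deg_leaf]
      simp [Matrix.one_apply]
    · rw [rsub_nadj r (hnell k l 1 1 hkl) (hnadjll k l 1 1 hkl)]
      simp [Matrix.one_apply, hkl]

lemma eval_charpoly {V : Type*} [Fintype V] [DecidableEq V] (M : Matrix V V ℝ) (r : ℝ) :
    eval r M.charpoly = (r • (1 : Matrix V V ℝ) - M).det := by
  rw [Matrix.charpoly]
  have h : eval r (M.charmatrix.det) = ((M.charmatrix).map (evalRingHom r)).det := by
    rw [← Polynomial.coe_evalRingHom, RingHom.map_det, RingHom.mapMatrix_apply]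
  rw [h]
  congr 1
  ext i j
  rcases eq_or_ne i j with rfl | hij
  · simp [Matrix.charmatrix_apply_eq, Matrix.one_apply_eq]
  · simp [Matrix.map_apply, Matrix.charmatrix_apply_ne _ _ _ hij, Matrix.one_apply_ne hij]

lemma charpoly_snK2 (m : ℕ) :
    ((snK2 (m+2)).lapMatrix ℝ).charpoly
      = X * (X - C 2) * (X - C ((m:ℝ)+2)) * (X - C ((m:ℝ)+4))
          * (X - C 1)^m * (X - C 3)^m := by
  apply eq_of_infinite_eval_eq
  apply Set.Infinite.mono (s := ({1, 2, 3, (m:ℝ)+3} : Set ℝ)ᶜ)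
  swap
  · exact Set.Finite.infinite_compl
      ((((Set.finite_singleton _).insert _).insert _).insert _)
  intro r hr
  simp only [Set.mem_compl_iff, Set.mem_insert_iff, Set.mem_singleton_iff, not_or] at hr
  obtain ⟨h1, h2, h3, h4⟩ := hr
  simp only [Set.mem_setOf_eq]
  rw [eval_charpoly, ← det_submatrix_equiv_self (vEquiv m), key m r]
  have hdB : (A2 m (r - ((m:ℝ)+2)) (r-2)).det ≠ 0 := by
    rw [A2_det _ _ _ (sub_ne_zero.2 h2)]
    have hq : (r-2) * (r - ((m:ℝ)+2)) - ((m:ℝ)+1) = (r-1)*(r-((m:ℝ)+3)) := by ring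
    rw [hq]
    exact mul_ne_zero (pow_ne_zero _ (sub_ne_zero.2 h2))
      (mul_ne_zero (sub_ne_zero.2 h1) (sub_ne_zero.2 h4))
  rw [double_det _ _ hdB, A2_sub_one, A2_add_one,
    A2_det _ _ _ (by intro h; exact h3 (by linarith)),
    A2_det _ _ _ (by intro h; exact h1 (by linarith))]
  have e1 : r - 2 - 1 = r - 3 := by ring
  have e2 : r - 2 + 1 = r - 1 := by ring
  rw [e1, e2]
  have q1 : (r-3) * (r - ((m:ℝ)+2) - 1) - ((m:ℝ)+1) = (r-2)*(r-((m:ℝ)+4)) := by ring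
  have q2 : (r-1) * (r - ((m:ℝ)+2) + 1) - ((m:ℝ)+1) = r*(r-((m:ℝ)+2)) := by ring
  rw [q1, q2]
  simp only [eval_mul, eval_pow, eval_sub, eval_X, eval_C, eval_one]
  ring

end
end SnK2Aux

/-- The Kirchhoff index of `S_n × K_2`, i.e. `2n` times the sum of the reciprocals of the
nonzero Laplacian eigenvalues (counted with multiplicity, as roots of the characteristic
polynomial of the Laplacian matrix), equals `(8n³ + 3n² - 14n + 12)/(3n + 6)`. -/
theorem kirchhoff_index_snK2 (n : ℕ) (hn : 2 ≤ n) :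
    (2 * n : ℝ) *
        ((((snK2 n).lapMatrix ℝ).charpoly.roots.filter (fun μ => μ ≠ 0)).map
          (fun μ => μ⁻¹)).sum =
      (8 * n ^ 3 + 3 * n ^ 2 - 14 * n + 12) / (3 * n + 6) := by
  obtain ⟨m, rfl⟩ : ∃ m, n = m + 2 := ⟨n - 2, by omega⟩
  rw [SnK2Aux.charpoly_snK2 m]
  set M0 : Multiset ℝ :=
    0 ::ₘ 2 ::ₘ ((m:ℝ)+2) ::ₘ ((m:ℝ)+4) ::ₘ
      (Multiset.replicate m 1 + Multiset.replicate m 3) with hM0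
  have hP : X * (X - C 2) * (X - C ((m:ℝ)+2)) * (X - C ((m:ℝ)+4))
        * (X - C 1)^m * (X - C 3)^m
      = (M0.map (fun a => X - C a)).prod := by
    simp only [hM0, Multiset.map_cons, Multiset.prod_cons, Multiset.map_add,
      Multiset.prod_add, Multiset.map_replicate, Multiset.prod_replicate, map_zero, sub_zero]
    ring
  rw [hP, Polynomial.roots_multiset_prod_X_sub_C]
  have hm2 : ((m:ℝ)+2) ≠ 0 := by positivity
  have hm4 : ((m:ℝ)+4) ≠ 0 := by positivity
  have hfilter : M0.filter (fun μ => μ ≠ 0)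
      = 2 ::ₘ ((m:ℝ)+2) ::ₘ ((m:ℝ)+4) ::ₘ
          (Multiset.replicate m 1 + Multiset.replicate m 3) := by
    rw [hM0, Multiset.filter_cons_of_neg _ (by simp),
      Multiset.filter_cons_of_pos (p := fun μ : ℝ => μ ≠ 0) _ (by norm_num),
      Multiset.filter_cons_of_pos (p := fun μ : ℝ => μ ≠ 0) _ hm2,
      Multiset.filter_cons_of_pos (p := fun μ : ℝ => μ ≠ 0) _ hm4,
      Multiset.filter_eq_self.2 ?_]
    intro a ha
    rcases Multiset.mem_add.1 ha with h | h <;>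
      rw [Multiset.eq_of_mem_replicate h] <;> norm_num
  rw [hfilter]
  simp only [Multiset.map_cons, Multiset.sum_cons, Multiset.map_add, Multiset.sum_add,
    Multiset.map_replicate, Multiset.sum_replicate, smul_eq_mul]
  have h3 : (3:ℝ) ≠ 0 := by norm_num
  have h36 : (3:ℝ) * ((m:ℝ)+2) + 6 ≠ 0 := by positivity
  push_cast
  field_simp
  ring
end

section
/- The number of spanning trees of S_n × K_2 equals (n+2)·3^(n-2). -/
/-!
Write `n = m + 1` and label the edges of `S_n × K_2` by `none`, the central rung
`(0,0)–(0,1)`, and by `some (k, j)` for the three edges `(0,0)–(k+1,0)`, `(k+1,0)–(k+1,1)`,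
`(k+1,1)–(0,1)` of the `k`-th leaf square. A spanning subgraph is a tree iff it is connected and
has `2m + 1` edges. Connectivity forces at least two of the three edges of every leaf square, so
counting edges, a spanning tree either contains the central rung and exactly two edges of every
square (`3^m` trees), or omits the rung and contains all three edges of exactly one square
(`m · 3^(m-1)` trees).
-/

open SimpleGraph Finset

namespace SimpleGraph

variable {V : Type*}

theorem card_isSpanning_coe_isTree_eq (G : SimpleGraph V) :
    Nat.card {H : G.Subgraph // H.IsSpanning ∧ H.coe.IsTree} =
      Nat.card {T : SimpleGraph V // T ≤ G ∧ T.IsTree} :=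
  Nat.card_congr
    { toFun H := ⟨H.1.spanningCoe, H.1.spanningCoe_le,
        (H.1.spanningCoeEquivCoeOfSpanning H.2.1).isTree_iff.2 H.2.2⟩
      invFun T := ⟨toSubgraph T.1 T.2.1, toSubgraph.isSpanning _ _,
        ((toSubgraph T.1 T.2.1).spanningCoeEquivCoeOfSpanning
          (toSubgraph.isSpanning _ _)).isTree_iff.1 T.2.2⟩
      left_inv H := Subtype.ext (Subgraph.ext H.2.1.verts_eq_univ.symm rfl)
      right_inv _ := rfl }

theorem Reachable.exists_adj_mem_notMem {G : SimpleGraph V} {S : Set V} {u v : V}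
    (h : G.Reachable u v) (hu : u ∈ S) (hv : v ∉ S) : ∃ a ∈ S, ∃ b ∉ S, G.Adj a b := by
  obtain ⟨p⟩ := h
  obtain ⟨d, -, hd₁, hd₂⟩ := p.exists_boundary_dart S hu hv
  exact ⟨_, hd₁, _, hd₂, d.adj⟩

section EdgeLabeling

variable {E : Type*} {G : SimpleGraph V} {ε : E → Sym2 V}

theorem adj_fromEdgeSet_image_iff (hG : Set.range ε = G.edgeSet) {S : Set E} {u v : V} :
    (fromEdgeSet (ε '' S)).Adj u v ↔ ∃ x ∈ S, ε x = s(u, v) := by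
  rw [fromEdgeSet_adj, Set.mem_image]
  refine and_iff_left_of_imp ?_
  rintro ⟨x, -, hx⟩
  exact G.ne_of_adj (G.mem_edgeSet.1 (hG ▸ hx ▸ Set.mem_range_self x))

theorem edgeSet_fromEdgeSet_image (hG : Set.range ε = G.edgeSet) (S : Set E) :
    (fromEdgeSet (ε '' S)).edgeSet = ε '' S := by
  rw [edgeSet_fromEdgeSet, sdiff_eq_left, Set.disjoint_left]
  rintro _ ⟨x, -, rfl⟩
  exact G.not_isDiag_of_mem_edgeSet (hG ▸ Set.mem_range_self x)

noncomputable def labelingEquivLe (hε : ε.Injective) (hG : Set.range ε = G.edgeSet) :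
    (E → Bool) ≃ {T : SimpleGraph V // T ≤ G} where
  toFun χ := ⟨fromEdgeSet (ε '' {x | χ x}), by
    rw [← edgeSet_subset_edgeSet, edgeSet_fromEdgeSet_image hG, ← hG]
    exact Set.image_subset_range _ _⟩
  invFun T x := by classical exact decide (ε x ∈ T.1.edgeSet)
  left_inv χ := by
    funext x
    simp [edgeSet_fromEdgeSet_image hG, hε.mem_set_image]
  right_inv T := by
    refine Subtype.ext (edgeSet_injective ?_)
    rw [edgeSet_fromEdgeSet_image hG]
    simp only [decide_eq_true_eq]
    exact Set.image_preimage_eq_of_subset (hG ▸ edgeSet_mono T.2)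

theorem card_le_and_eq_card_labeling (hε : ε.Injective) (hG : Set.range ε = G.edgeSet)
    (P : SimpleGraph V → Prop) :
    Nat.card {T : SimpleGraph V // T ≤ G ∧ P T} =
      Nat.card {χ : E → Bool // P (fromEdgeSet (ε '' {x | χ x}))} :=
  Nat.card_congr <| (Equiv.subtypeSubtypeEquivSubtypeInter (· ≤ G) P).symm.trans
    ((labelingEquivLe hε hG).subtypeEquiv fun _ => Iff.rfl).symm

end EdgeLabeling

end SimpleGraph

theorem card_filter_piFinset_card_filter_mem_eq {ι α : Type*} [Fintype ι] [DecidableEq ι]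
    [DecidableEq α] {A B : Finset α} (hAB : Disjoint A B) (t : ℕ) :
    #{f ∈ Fintype.piFinset fun _ : ι => A ∪ B | #{i | f i ∈ B} = t} =
      (Fintype.card ι).choose t * #B ^ t * #A ^ (Fintype.card ι - t) := by
  set s := {f ∈ Fintype.piFinset fun _ : ι => A ∪ B | #{i | f i ∈ B} = t}
  have fiber : ∀ D ∈ powersetCard t (univ : Finset ι),
      {f ∈ s | ({i | f i ∈ B} : Finset ι) = D} =
        Fintype.piFinset fun i => if i ∈ D then B else A := by
    intro D hD
    ext f
    simp only [s, mem_filter, Fintype.mem_piFinset, mem_union]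
    constructor
    · rintro ⟨⟨hf, -⟩, rfl⟩ i
      by_cases hi : f i ∈ B <;> simp [hi]
      exact (hf i).resolve_right hi
    · intro hf
      have hD' : ({i | f i ∈ B} : Finset ι) = D := by
        ext i
        have := hf i
        by_cases hi : i ∈ D <;> simp_all
        exact disjoint_left.1 hAB this
      refine ⟨⟨fun i => ?_, hD' ▸ (mem_powersetCard.1 hD).2⟩, hD'⟩
      have := hf i
      split_ifs at this <;> simp [this]
  rw [card_eq_sum_card_fiberwise (f := fun f => ({i | f i ∈ B} : Finset ι)) (s := s)
    (t := powersetCard t univ)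
    (fun f hf => mem_powersetCard.2 ⟨subset_univ _, (mem_filter.1 hf).2⟩)]
  rw [sum_congr rfl fun D hD => by
    rw [fiber D hD, Fintype.card_piFinset, prod_apply_ite, prod_const, prod_const,
      filter_mem_eq_inter, univ_inter, filter_not, filter_mem_eq_inter, univ_inter,
      card_sdiff_of_subset (subset_univ _), card_univ, (mem_powersetCard.1 hD).2]]
  rw [sum_const, card_powersetCard, card_univ, smul_eq_mul, mul_assoc]

namespace snK2

variable {m : ℕ}

def edge : Option (Fin m × Fin 3) → Sym2 (Fin (m + 1) × Fin 2)
  | none => s((0, 0), (0, 1))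
  | some (k, j) => ![s((0, 0), (k.succ, 0)), s((k.succ, 0), (k.succ, 1)), s((k.succ, 1), (0, 1))] j

theorem edge_injective : Function.Injective (edge (m := m)) := by
  rintro (_ | ⟨k, j⟩) (_ | ⟨l, i⟩) h
  · rfl
  all_goals (try fin_cases j) <;> (try fin_cases i) <;>
    simp_all [edge, Prod.ext_iff, Fin.succ_ne_zero, (Fin.succ_ne_zero _).symm]

theorem range_edge : Set.range (edge (m := m)) = (snK2 (m + 1)).edgeSet := by
  ext e
  constructor
  · rintro ⟨_ | ⟨k, j⟩, rfl⟩
    · simp [edge, snK2]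
    · fin_cases j <;> simp [edge, snK2, Fin.succ_ne_zero, (Fin.succ_ne_zero _).symm]
  · induction e using Sym2.ind with
    | _ p q =>
    obtain ⟨a, i⟩ := p
    obtain ⟨b, j⟩ := q
    simp only [snK2, mem_edgeSet, fromRel_adj, Set.mem_range]
    induction a using Fin.cases <;> induction b using Fin.cases <;> fin_cases i <;> fin_cases j <;>
      simp [edge, Option.exists, Prod.exists, Fin.exists_fin_succ, Sym2.eq_swap, Fin.succ_ne_zero,
        (Fin.succ_ne_zero _).symm]
    all_goals grind

abbrev ofLabeling (χ : Option (Fin m × Fin 3) → Bool) : SimpleGraph (Fin (m + 1) × Fin 2) :=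
  fromEdgeSet (edge '' {x | χ x})

variable {χ : Option (Fin m × Fin 3) → Bool}

theorem ofLabeling_adj {u v : Fin (m + 1) × Fin 2} :
    (ofLabeling χ).Adj u v ↔ ∃ x, χ x ∧ edge x = s(u, v) :=
  adj_fromEdgeSet_image_iff range_edge

theorem adj_of_edge {x : Option (Fin m × Fin 3)} (hx : χ x) {u v : Fin (m + 1) × Fin 2}
    (he : edge x = s(u, v)) : (ofLabeling χ).Adj u v :=
  ofLabeling_adj.2 ⟨x, hx, he⟩

theorem two_le_card_iff (g : Fin 3 → Bool) :
    2 ≤ #{j | g j} ↔ (g 0 ∨ g 1) ∧ (g 1 ∨ g 2) ∧ (g 0 ∨ g 2) := by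
  revert g; decide

theorem card_eq_three_iff (g : Fin 3 → Bool) : #{j | g j} = 3 ↔ ∀ j, g j := by
  revert g; decide

theorem two_le_card_leaf_of_connected (h : (ofLabeling χ).Connected) (k : Fin m) :
    2 ≤ #{j | χ (some (k, j))} := by
  have cut : ∀ S : Set (Fin (m + 1) × Fin 2), S ⊆ {p | p.1 = k.succ} → S.Nonempty →
      ∃ x, χ x ∧ ∃ a ∈ S, ∃ b ∉ S, edge x = s(a, b) := by
    rintro S hS ⟨u, hu⟩
    have h0 : ((0, 0) : Fin (m + 1) × Fin 2) ∉ S := fun h0 => k.succ_ne_zero (hS h0).symm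
    obtain ⟨a, ha, b, hb, hab⟩ := (h.preconnected u (0, 0)).exists_adj_mem_notMem hu h0
    obtain ⟨x, hx, he⟩ := ofLabeling_adj.1 hab
    exact ⟨x, hx, a, ha, b, hb, he⟩
  rw [two_le_card_iff]
  -- `(k+1,0)`, `(k+1,1)` and the column `k+1` are each cut off by two of the three leaf edges.
  refine ⟨?_, ?_, ?_⟩ <;>
  [obtain ⟨x, hx, a, ha, b, hb, he⟩ := cut {(k.succ, 0)} (by simp) (by simp);
   obtain ⟨x, hx, a, ha, b, hb, he⟩ := cut {(k.succ, 1)} (by simp) (by simp);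
   obtain ⟨x, hx, a, ha, b, hb, he⟩ := cut {p | p.1 = k.succ} subset_rfl ⟨(k.succ, 0), rfl⟩] <;>
  rcases x with _ | ⟨l, j⟩ <;> try fin_cases j
  all_goals simp [edge, Prod.ext_iff] at he hb ha
  all_goals grind

theorem connected_of_two_le_card_leaf (hleaf : ∀ k, 2 ≤ #{j | χ (some (k, j))})
    (hcenter : χ none ∨ ∃ k, ∀ j, χ (some (k, j))) : (ofLabeling χ).Connected := by
  have center : (ofLabeling χ).Reachable (0, 1) (0, 0) := by
    obtain h | ⟨k, hk⟩ := hcenter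
    · exact (adj_of_edge h rfl).symm.reachable
    · exact (adj_of_edge (hk 2) rfl).symm.reachable.trans
        ((adj_of_edge (hk 1) rfl).symm.reachable.trans (adj_of_edge (hk 0) rfl).symm.reachable)
  rw [connected_iff_exists_forall_reachable]
  refine ⟨(0, 0), fun ⟨a, i⟩ => Reachable.symm ?_⟩
  induction a using Fin.cases with
  | zero => fin_cases i; exacts [.rfl, center]
  | succ k =>
    obtain ⟨h01, h12, h02⟩ := (two_le_card_iff _).1 (hleaf k)
    fin_cases i
    · by_cases h0 : χ (some (k, 0))
      · exact (adj_of_edge h0 rfl).symm.reachable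
      · exact (adj_of_edge (h01.resolve_left h0) rfl).reachable.trans
          ((adj_of_edge (h02.resolve_left h0) rfl).reachable.trans center)
    · by_cases h2 : χ (some (k, 2))
      · exact (adj_of_edge h2 rfl).reachable.trans center
      · exact (adj_of_edge (h12.resolve_right h2) rfl).symm.reachable.trans
          (adj_of_edge (h02.resolve_right h2) rfl).symm.reachable

theorem card_edgeSet_ofLabeling :
    Nat.card (ofLabeling χ).edgeSet = (χ none).toNat + ∑ k, #{j | χ (some (k, j))} := by
  rw [edgeSet_fromEdgeSet_image range_edge, Nat.card_image_of_injective edge_injective,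
    Nat.card_eq_card_toFinset, Set.toFinset_ofPred, card_filter, Fintype.sum_option,
    Fintype.sum_prod_type]
  simp only [card_filter]
  cases χ none <;> rfl

theorem sum_card_leaf (hleaf : ∀ k, 2 ≤ #{j | χ (some (k, j))}) :
    ∑ k, #{j | χ (some (k, j))} = 2 * m + #{k | #{j | χ (some (k, j))} = 3} :=
  calc ∑ k, #{j | χ (some (k, j))}
      = ∑ k, (2 + if #{j | χ (some (k, j))} = 3 then 1 else 0) := sum_congr rfl fun k _ => by
        have := hleaf k
        have : #{j | χ (some (k, j))} ≤ 3 := (card_le_univ _).trans_eq (Fintype.card_fin 3)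
        split_ifs <;> omega
    _ = 2 * m + #{k | #{j | χ (some (k, j))} = 3} := by
        rw [sum_add_distrib, card_filter]
        simp [mul_comm]

theorem isTree_ofLabeling_iff : (ofLabeling χ).IsTree ↔
    (∀ k, 2 ≤ #{j | χ (some (k, j))}) ∧
      (χ none).toNat + #{k | #{j | χ (some (k, j))} = 3} = 1 := by
  rw [isTree_iff_connected_and_card, card_edgeSet_ofLabeling, Nat.card_eq_fintype_card,
    Fintype.card_prod, Fintype.card_fin, Fintype.card_fin]
  constructor
  · rintro ⟨hconn, hcard⟩
    have hleaf := two_le_card_leaf_of_connected hconn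
    rw [sum_card_leaf hleaf] at hcard
    exact ⟨hleaf, by omega⟩
  · rintro ⟨hleaf, hone⟩
    refine ⟨connected_of_two_le_card_leaf hleaf ?_, by rw [sum_card_leaf hleaf]; omega⟩
    cases hnone : χ none
    · rw [hnone, Bool.toNat_false, zero_add] at hone
      obtain ⟨k, hk⟩ := card_pos.1 (by omega : 0 < #{k | #{j | χ (some (k, j))} = 3})
      exact Or.inr ⟨k, (card_eq_three_iff _).1 (mem_filter.1 hk).2⟩
    · exact Or.inl rfl

theorem card_leaf_choices (t : ℕ) :
    #{f : Fin m → Fin 3 → Bool | (∀ k, 2 ≤ #{j | f k j}) ∧ #{k | #{j | f k j} = 3} = t} =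
      m.choose t * 3 ^ (m - t) := by
  have hA : #{g : Fin 3 → Bool | #{j | g j} = 2} = 3 := by decide
  have hB : #{g : Fin 3 → Bool | #{j | g j} = 3} = 1 := by decide
  have := card_filter_piFinset_card_filter_mem_eq (ι := Fin m)
    (A := {g : Fin 3 → Bool | #{j | g j} = 2}) (B := {g | #{j | g j} = 3})
    (disjoint_filter.2 fun g _ h => h.trans_ne (by decide)) t
  rw [hA, hB, one_pow, mul_one, Fintype.card_fin] at this
  rw [← this]
  congr 1
  ext f
  simp only [mem_filter, Fintype.mem_piFinset, mem_union, mem_univ, true_and]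
  refine and_congr_left fun _ => forall_congr' fun k => ?_
  have : #{j | f k j} ≤ 3 := (card_le_univ _).trans_eq (Fintype.card_fin 3)
  omega

theorem card_isTree_ofLabeling :
    Nat.card {χ : Option (Fin m × Fin 3) → Bool // (ofLabeling χ).IsTree} =
      3 ^ m + m * 3 ^ (m - 1) := by
  let e : (Option (Fin m × Fin 3) → Bool) ≃ Bool × (Fin m → Fin 3 → Bool) :=
    Equiv.piOptionEquivProd.trans (Equiv.prodCongr (Equiv.refl _) (Equiv.curry _ _ _))
  rw [Nat.card_congr (e.subtypeEquiv (q := fun c => (∀ k, 2 ≤ #{j | c.2 k j}) ∧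
      c.1.toNat + #{k | #{j | c.2 k j} = 3} = 1) fun χ => isTree_ofLabeling_iff),
    Nat.card_eq_fintype_card, Fintype.card_subtype, card_filter, Fintype.sum_prod_type,
    Fintype.sum_bool]
  simp only [Bool.toNat_true, Bool.toNat_false, add_eq_left, zero_add]
  rw [← card_filter, ← card_filter, card_leaf_choices, card_leaf_choices]
  simp

theorem card_spanning_trees (m : ℕ) :
    Nat.card {H : (snK2 (m + 1)).Subgraph // H.IsSpanning ∧ H.coe.IsTree} =
      3 ^ m + m * 3 ^ (m - 1) := by
  rw [card_isSpanning_coe_isTree_eq, card_le_and_eq_card_labeling edge_injective range_edge,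
    card_isTree_ofLabeling]

end snK2

/-- The number of spanning trees of `S_n × K_2` is `(n+2)·3^(n-2)`. -/
theorem num_spanning_trees_snK2 (n : ℕ) (hn : 2 ≤ n) :
    Nat.card {H : (snK2 n).Subgraph // H.IsSpanning ∧ H.coe.IsTree} =
      (n + 2) * 3 ^ (n - 2) := by
  obtain ⟨m, rfl⟩ : ∃ m, n = m + 2 := ⟨n - 2, by omega⟩
  rw [snK2.card_spanning_trees (m + 1), Nat.add_sub_cancel, Nat.add_sub_cancel, pow_succ]
  ring
end

section
/- The Wiener index of S_n × K_2 equals 5n² - 8n + 4. -/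
namespace SimpleGraph

variable {α β V : Type*}

lemma dist_boxProd {G : SimpleGraph α} {H : SimpleGraph β} {x y : α × β}
    (hG : G.Reachable x.1 y.1) (hH : H.Reachable x.2 y.2) :
    (G □ H).dist x y = G.dist x.1 y.1 + H.dist x.2 y.2 := by
  apply Nat.cast_injective (R := ℕ∞)
  rw [Nat.cast_add, (reachable_boxProd.2 ⟨hG, hH⟩).coe_dist_eq_edist, hG.coe_dist_eq_edist,
    hH.coe_dist_eq_edist, edist_boxProd]

lemma sum_sum_dist_boxProd [Fintype α] [Fintype β] {G : SimpleGraph α} {H : SimpleGraph β}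
    (hG : G.Connected) (hH : H.Connected) :
    ∑ x : α × β, ∑ y : α × β, (G □ H).dist x y =
      Fintype.card β ^ 2 * ∑ a : α, ∑ c : α, G.dist a c +
        Fintype.card α ^ 2 * ∑ b : β, ∑ d : β, H.dist b d := by
  simp only [dist_boxProd (hG _ _) (hH _ _), Fintype.sum_prod_type, Finset.sum_add_distrib,
    Finset.sum_const, Finset.card_univ, smul_eq_mul, ← Finset.mul_sum]
  ring

lemma sum_sum_dist_top [Fintype V] [DecidableEq V] :
    ∑ v : V, ∑ w : V, (⊤ : SimpleGraph V).dist v w = Fintype.card V * (Fintype.card V - 1) := by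
  simp [dist_top, Finset.sum_ite, Finset.filter_ne]

lemma dist_starGraph [DecidableEq V] (r v w : V) :
    (starGraph r).dist v w =
      if v = w then 0 else (if v = r then 0 else 1) + (if w = r then 0 else 1) := by
  by_cases hvw : v = w
  · simp [hvw]
  by_cases hvr : v = r
  · subst hvr
    rw [if_neg hvw, if_pos rfl, if_neg (Ne.symm hvw)]
    exact dist_eq_one_iff_adj.2 (starGraph_center_adj hvw)
  by_cases hwr : w = r
  · subst hwr
    rw [if_neg hvw, if_neg hvr, if_pos rfl]
    exact dist_eq_one_iff_adj.2 (starGraph_center_adj' (Ne.symm hvr))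
  have h2 : (starGraph r).edist v w = 2 :=
    edist_eq_two_iff.2 ⟨hvw, by rw [starGraph_adj]; tauto,
      ⟨r, (mem_commonNeighbors _).2
        ⟨starGraph_center_adj' (Ne.symm hvr), starGraph_center_adj' (Ne.symm hwr)⟩⟩⟩
  rw [if_neg hvw, if_neg hvr, if_neg hwr]
  exact_mod_cast ((connected_starGraph r) v w).coe_dist_eq_edist.trans h2

lemma sum_sum_dist_starGraph [Fintype V] [DecidableEq V] (r : V) :
    ∑ v : V, ∑ w : V, (starGraph r).dist v w = 2 * (Fintype.card V - 1) ^ 2 := by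
  set depth : V → ℕ := fun v => if v = r then 0 else 1
  have row (v : V) :
      ∑ w : V, (if v = w then 0 else depth v) = (Fintype.card V - 1) * depth v := by
    simp [Finset.sum_ite, Finset.filter_ne]
  have leaves : ∑ v, depth v = Fintype.card V - 1 := by
    simp [depth, Finset.sum_ite, Finset.filter_ne']
  calc ∑ v, ∑ w, (starGraph r).dist v w
      = ∑ v, ∑ w, ((if v = w then 0 else depth v) + (if w = v then 0 else depth w)) := by
        refine Fintype.sum_congr _ _ fun v => Fintype.sum_congr _ _ fun w => ?_
        rw [dist_starGraph]
        by_cases h : v = w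
        · simp [h]
        · simp [h, Ne.symm h, depth]
    _ = 2 * ∑ v, ∑ w, (if v = w then 0 else depth v) := by
        simp only [Finset.sum_add_distrib]
        rw [Finset.sum_comm (f := fun v w => if w = v then 0 else depth w), two_mul]
    _ = 2 * (Fintype.card V - 1) ^ 2 := by
        rw [Fintype.sum_congr _ _ row, ← Finset.mul_sum, leaves, sq]

end SimpleGraph

open SimpleGraph

lemma snK2_eq_boxProd {n : ℕ} (hn : 0 < n) :
    snK2 n = starGraph (⟨0, hn⟩ : Fin n) □ (⊤ : SimpleGraph (Fin 2)) := by
  ext p q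
  simp only [snK2, fromRel_adj, boxProd_adj, starGraph_adj, top_adj, ne_eq, not_and,
    Prod.ext_iff, Fin.ext_iff]
  tauto

/-- The Wiener index of `S_n × K_2` is `5n² - 8n + 4`: the sum of all pairwise
distances (each unordered pair counted twice) equals `2·(5n² - 8n + 4)`. -/
theorem wiener_index_snK2 (n : ℕ) (hn : 2 ≤ n) :
    (∑ u : Fin n × Fin 2, ∑ v : Fin n × Fin 2, (snK2 n).dist u v) =
      2 * (5 * n ^ 2 - 8 * n + 4) := by
  rw [snK2_eq_boxProd (by omega), sum_sum_dist_boxProd (connected_starGraph _) connected_top,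
    sum_sum_dist_starGraph, sum_sum_dist_top]
  simp only [Fintype.card_fin]
  have hsub : 8 * n ≤ 5 * n ^ 2 := by nlinarith
  zify [hsub, (by omega : 1 ≤ n)]
  ring
end

section
/- The eigenvalues of the n×n matrix M with M(1,1)=(n-1)/n, M(1,j)=M(j,1)=-1/√(2n) for j≥2, M(j,j)=1/2 for j≥2, and all other entries 0, are {0, 1/2 (with multiplicity n-2), (3n-2)/(2n)}. -/
open Polynomial

/-- The spectrum of the normalized-Laplacian block `𝓛_A(S_n^2)`, the `n×n` matrix with
`M 0 0 = (n-1)/n`, `M 0 j = M j 0 = -1/√(2n)` for `j ≠ 0`, `M j j = 1/2` for `j ≠ 0`,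
other entries `0`, is `{0, (1/2)^(n-2), (3n-2)/(2n)}`. -/
theorem spectrum_norm_LA (n : ℕ) (hn : 2 ≤ n)
    (M : Matrix (Fin n) (Fin n) ℝ)
    (hM : M = Matrix.of fun i j =>
      if i = j then (if i.val = 0 then ((n : ℝ) - 1) / n else 1 / 2)
      else if i.val = 0 ∨ j.val = 0 then -1 / Real.sqrt (2 * n) else 0) :
    M.charpoly = X * (X - C (1 / 2 : ℝ)) ^ (n - 2) * (X - C ((3 * (n : ℝ) - 2) / (2 * n))) := by
  have hn0 : (n : ℝ) ≠ 0 := by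
    have : (0:ℕ) < n := by omega
    exact_mod_cast this.ne'
  have hn0' : (0:ℝ) < (n:ℝ) := by exact_mod_cast (by omega : 0 < n)
  have hsq : Real.sqrt (2 * n) * Real.sqrt (2 * n) = 2 * n :=
    Real.mul_self_sqrt (by positivity)
  have hsqpos : (0:ℝ) < Real.sqrt (2 * n) := Real.sqrt_pos.mpr (by positivity)
  set a : ℝ := ((n : ℝ) - 1) / n with ha
  set c : ℝ := 1 / Real.sqrt (2 * n) with hc
  have hcc : c * c = 1 / (2 * n) := by
    rw [hc, div_mul_div_comm, one_mul, hsq]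
  apply Polynomial.eq_of_infinite_eval_eq
  have hinf : ({(1:ℝ)/2}ᶜ : Set ℝ).Infinite := (Set.finite_singleton _).infinite_compl
  refine Set.Infinite.mono ?_ hinf
  intro x hx
  have hx' : x ≠ 1/2 := fun h => hx (by simp [h])
  have hx2 : x - 1/2 ≠ 0 := sub_ne_zero.mpr hx'
  -- evaluate charpoly at x
  have heval : eval x M.charpoly = (x • (1 : Matrix (Fin n) (Fin n) ℝ) - M).det := by
    rw [Matrix.charpoly, ← Polynomial.coe_evalRingHom, RingHom.map_det]
    congr 1
    ext i j
    by_cases h : i = j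
    · subst h
      simp [Matrix.charmatrix_apply_eq, Matrix.one_apply, Matrix.sub_apply]
    · simp [Matrix.charmatrix_apply_ne _ _ _ h, Matrix.one_apply_ne h, Matrix.sub_apply]
  -- reindex to a block matrix
  set N : Matrix (Fin n) (Fin n) ℝ := x • (1 : Matrix (Fin n) (Fin n) ℝ) - M with hN
  have hcard : 1 + (n - 1) = n := by omega
  set e : Fin 1 ⊕ Fin (n - 1) ≃ Fin n := finSumFinEquiv.trans (finCongr hcard) with he
  have heinl : ∀ i : Fin 1, (e (Sum.inl i)).val = 0 := by
    intro i
    simp [he, finSumFinEquiv, Fin.castAdd, Fin.fin_one_eq_zero i]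
  have heinr : ∀ j : Fin (n-1), (e (Sum.inr j)).val = 1 + j.val := by
    intro j
    simp [he, finSumFinEquiv, Fin.natAdd]
  set A : Matrix (Fin 1) (Fin 1) ℝ := Matrix.of fun _ _ => x - a with hA
  set B : Matrix (Fin 1) (Fin (n-1)) ℝ := Matrix.of fun _ _ => c with hB
  set Cm : Matrix (Fin (n-1)) (Fin 1) ℝ := Matrix.of fun _ _ => c with hCm
  set D : Matrix (Fin (n-1)) (Fin (n-1)) ℝ := (x - 1/2) • 1 with hD
  have hblock : N.submatrix e e = Matrix.fromBlocks A B Cm D := by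
    ext i j
    have hNapp : ∀ p q : Fin n, N p q =
        (if p = q then x else 0) - M p q := by
      intro p q
      simp [hN, Matrix.sub_apply, Matrix.smul_apply, Matrix.one_apply]
    cases i with
    | inl i =>
      cases j with
      | inl j =>
        have hij : e (Sum.inl i) = e (Sum.inl j) := by
          apply Fin.ext; rw [heinl, heinl]
        simp only [Matrix.submatrix_apply, Matrix.fromBlocks_apply₁₁, hNapp, hij, hM,
          Matrix.of_apply]
        simp [heinl, hA]
      | inr j =>
        have hij : e (Sum.inl i) ≠ e (Sum.inr j) := by
          intro h
          have := congrArg Fin.val h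
          rw [heinl, heinr] at this; omega
        simp only [Matrix.submatrix_apply, Matrix.fromBlocks_apply₁₂, hNapp, hM,
          Matrix.of_apply]
        rw [if_neg hij, if_neg hij, if_pos (Or.inl (heinl i))]
        simp [hB, hc, neg_div]
    | inr i =>
      cases j with
      | inl j =>
        have hij : e (Sum.inr i) ≠ e (Sum.inl j) := by
          intro h
          have := congrArg Fin.val h
          rw [heinl, heinr] at this; omega
        simp only [Matrix.submatrix_apply, Matrix.fromBlocks_apply₂₁, hNapp, hM,
          Matrix.of_apply]
        rw [if_neg hij, if_neg hij, if_pos (Or.inr (heinl j))]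
        simp [hCm, hc, neg_div]
      | inr j =>
        have h0i : ¬((e (Sum.inr i)).val = 0) := by rw [heinr]; omega
        have h0j : ¬((e (Sum.inr j)).val = 0) := by rw [heinr]; omega
        by_cases hij : i = j
        · subst hij
          simp only [Matrix.submatrix_apply, Matrix.fromBlocks_apply₂₂, hNapp, hM,
            Matrix.of_apply]
          simp [h0i, hD, Matrix.smul_apply, Matrix.one_apply]
        · have heij : e (Sum.inr i) ≠ e (Sum.inr j) := by
            intro h
            exact hij (Sum.inr_injective (e.injective h))
          simp only [Matrix.submatrix_apply, Matrix.fromBlocks_apply₂₂, hNapp, hM,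
            Matrix.of_apply]
          rw [if_neg heij, if_neg heij,
            if_neg (by tauto : ¬((e (Sum.inr i)).val = 0 ∨ (e (Sum.inr j)).val = 0))]
          simp [hD, Matrix.smul_apply, Matrix.one_apply_ne hij]
  -- invertibility of D
  haveI hDinv : Invertible D :=
    ⟨(x - 1/2)⁻¹ • 1, by
      rw [hD, Matrix.smul_mul, Matrix.mul_smul, smul_smul, Matrix.one_mul,
        inv_mul_cancel₀ hx2, one_smul], by
      rw [hD, Matrix.smul_mul, Matrix.mul_smul, smul_smul, Matrix.one_mul,
        mul_inv_cancel₀ hx2, one_smul]⟩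
  have hinvD : (⅟D : Matrix (Fin (n-1)) (Fin (n-1)) ℝ) = (x - 1/2)⁻¹ • 1 :=
    invOf_eq_right_inv (by
      rw [hD, Matrix.smul_mul, Matrix.mul_smul, smul_smul, Matrix.one_mul,
        mul_inv_cancel₀ hx2, one_smul])
  have hcast : ((n - 1 : ℕ) : ℝ) = (n:ℝ) - 1 := by
    have h1 : (1:ℕ) ≤ n := by omega
    push_cast [h1]; ring
  have hBDC : B * ⅟D * Cm = Matrix.of fun (_ : Fin 1) (_ : Fin 1) =>
      ((n:ℝ) - 1) * (c * c) * (x - 1/2)⁻¹ := by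
    rw [hinvD, Matrix.mul_smul, Matrix.mul_one, Matrix.smul_mul]
    ext i j
    simp only [Matrix.smul_apply, Matrix.mul_apply, hB, hCm, Matrix.of_apply, smul_eq_mul]
    rw [Finset.sum_const, Finset.card_univ, Fintype.card_fin, nsmul_eq_mul, hcast]
    ring
  have hdet : N.det = (x - 1/2) ^ (n - 1) *
      ((x - a) - (x - 1/2)⁻¹ * (((n:ℝ) - 1) * (c * c))) := by
    rw [← Matrix.det_submatrix_equiv_self e N, hblock, Matrix.det_fromBlocks₂₂]
    congr 1
    · rw [hD, Matrix.det_smul, Matrix.det_one, mul_one, Fintype.card_fin]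
    · rw [Matrix.det_fin_one, Matrix.sub_apply, hBDC, hA]
      simp only [Matrix.of_apply]
      ring
  -- evaluate RHS
  have hrhs : eval x (X * (X - C (1 / 2 : ℝ)) ^ (n - 2) *
      (X - C ((3 * (n : ℝ) - 2) / (2 * n)))) =
      x * (x - 1/2) ^ (n - 2) * (x - (3 * (n:ℝ) - 2) / (2 * n)) := by
    simp
  show eval x M.charpoly = _
  rw [heval, hrhs, hdet, hcc]
  have hpow : (x - 1/2) ^ (n - 1) = (x - 1/2) ^ (n - 2) * (x - 1/2) := by
    rw [← pow_succ]
    congr 1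
    omega
  have key : (x - 1/2) * ((x - ((n:ℝ)-1)/n) - (x - 1/2)⁻¹ * (((n:ℝ)-1) * (1/(2*n)))) =
      x * (x - (3*(n:ℝ)-2)/(2*n)) := by
    rw [mul_sub, ← mul_assoc, mul_inv_cancel₀ hx2, one_mul]
    field_simp
    ring
  rw [hpow, ha]
  linear_combination ((x - 1/2) ^ (n - 2)) * key
end

section
/- The eigenvalues of the n×n matrix M with M(1,1)=(n+1)/n, M(1,j)=M(j,1)=-1/√(2n) for j≥2, M(j,j)=3/2 for j≥2, and all other entries 0, are {2, 3/2 (with multiplicity n-2), (n+2)/(2n)}. -/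
open Polynomial Matrix

lemma eval_charpoly' {k : Type*} [Fintype k] [DecidableEq k] (M : Matrix k k ℝ) (x : ℝ) :
    M.charpoly.eval x = (x • (1 : Matrix k k ℝ) - M).det := by
  rw [Matrix.charpoly, ← Polynomial.coe_evalRingHom, RingHom.map_det]
  congr 1
  ext i j
  by_cases h : i = j
  · subst h; simp [charmatrix_apply_eq, Matrix.one_apply]
  · simp [charmatrix_apply_ne _ _ _ h, Matrix.one_apply_ne h]

lemma det_arrow (m : ℕ) (x a b c : ℝ) (hc : c ≠ 0)
    (N : Matrix (Fin (m+2)) (Fin (m+2)) ℝ)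
    (hN : ∀ i j, N i j = if i = j then (if i.val = 0 then x - a else c)
      else if i.val = 0 ∨ j.val = 0 then b else 0) :
    N.det = c^(m+1) * (x - a - (m+1) * b^2 / c) := by
  have hmn : 1 + (m + 1) = m + 2 := by omega
  set e : Fin 1 ⊕ Fin (m+1) ≃ Fin (m+2) := finSumFinEquiv.trans (finCongr hmn) with he
  have hval1 : ∀ i : Fin 1, (e (Sum.inl i)).val = 0 := by
    intro i; simp [he, finSumFinEquiv, Fin.ext_iff]
  have hval2 : ∀ j : Fin (m+1), (e (Sum.inr j)).val = 1 + j.val := by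
    intro j; simp [he, finSumFinEquiv]; omega
  have key : N.submatrix e e = Matrix.fromBlocks
      (Matrix.of fun _ _ => x - a) (Matrix.of fun _ _ => b)
      (Matrix.of fun _ _ => b) (c • (1 : Matrix (Fin (m+1)) (Fin (m+1)) ℝ)) := by
    ext i j
    rcases i with i | i <;> rcases j with j | j <;>
      simp only [Matrix.submatrix_apply, hN, Matrix.fromBlocks_apply₁₁,
        Matrix.fromBlocks_apply₁₂, Matrix.fromBlocks_apply₂₁, Matrix.fromBlocks_apply₂₂,
        Matrix.of_apply, Matrix.smul_apply, Matrix.one_apply]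
    · simp [Subsingleton.elim i j, hval1 j]
    · have hne : e (Sum.inl i) ≠ e (Sum.inr j) := by
        intro h; have := congrArg Fin.val h; rw [hval1 i, hval2 j] at this; omega
      simp [hne, hval1 i]
    · have hne : e (Sum.inr i) ≠ e (Sum.inl j) := by
        intro h; have := congrArg Fin.val h; rw [hval1 j, hval2 i] at this; omega
      simp [hne, hval1 j]
    · have hzi : ¬((e (Sum.inr i)).val = 0) := by rw [hval2 i]; omega
      by_cases h : i = j
      · subst h; simp [hzi]
      · have hne : e (Sum.inr i) ≠ e (Sum.inr j) :=
          fun hh => h (Sum.inr_injective (e.injective hh))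
        have hzj : ¬((e (Sum.inr j)).val = 0) := by rw [hval2 j]; omega
        simp [hne, hzi, hzj, h]
  have hD : Invertible (c • (1 : Matrix (Fin (m+1)) (Fin (m+1)) ℝ)) :=
    ⟨c⁻¹ • 1, by rw [smul_mul_smul_comm, inv_mul_cancel₀ hc, one_mul, one_smul],
      by rw [smul_mul_smul_comm, mul_inv_cancel₀ hc, one_mul, one_smul]⟩
  have hdet := Matrix.det_submatrix_equiv_self e N
  rw [key] at hdet
  rw [← hdet, Matrix.det_fromBlocks₂₂]
  have hinv : (⅟(c • (1 : Matrix (Fin (m+1)) (Fin (m+1)) ℝ))) = c⁻¹ • 1 :=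
    invOf_eq_right_inv (by rw [smul_mul_smul_comm, mul_inv_cancel₀ hc, one_mul, one_smul])
  rw [hinv]
  have h1 : Matrix.det (c • (1 : Matrix (Fin (m+1)) (Fin (m+1)) ℝ)) = c ^ (m+1) := by
    simp [Matrix.det_smul]
  rw [h1]
  congr 1
  rw [Matrix.det_fin_one]
  simp only [Matrix.sub_apply, Matrix.of_apply, Matrix.mul_smul, Matrix.mul_one]
  rw [Matrix.mul_apply]
  simp [Finset.sum_const, Matrix.smul_apply, mul_comm, div_eq_mul_inv]
  ring

/-- The spectrum of the normalized-Laplacian block `𝓛_S(S_n^2)`, the `n×n` matrix with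
`M 0 0 = (n+1)/n`, `M 0 j = M j 0 = -1/√(2n)` for `j ≠ 0`, `M j j = 3/2` for `j ≠ 0`,
other entries `0`, is `{2, (3/2)^(n-2), (n+2)/(2n)}`. -/
theorem spectrum_norm_LS (n : ℕ) (hn : 2 ≤ n)
    (M : Matrix (Fin n) (Fin n) ℝ)
    (hM : M = Matrix.of fun i j =>
      if i = j then (if i.val = 0 then ((n : ℝ) + 1) / n else 3 / 2)
      else if i.val = 0 ∨ j.val = 0 then -1 / Real.sqrt (2 * n) else 0) :
    M.charpoly = (X - 2) * (X - C (3 / 2 : ℝ)) ^ (n - 2) * (X - C (((n : ℝ) + 2) / (2 * n))) := by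
  obtain ⟨m, rfl⟩ : ∃ m, n = m + 2 := ⟨n - 2, by omega⟩
  apply Polynomial.eq_of_infinite_eval_eq
  refine Set.Infinite.mono ?_ (Set.Ioi_infinite 2)
  intro x hx
  have hx2 : (2:ℝ) < x := hx
  have hc : x - 3/2 ≠ 0 := by norm_num; linarith
  have hnR : (0:ℝ) < (m:ℝ) + 2 := by positivity
  have hnn : ((m+2:ℕ):ℝ) = (m:ℝ) + 2 := by push_cast; ring
  simp only [Set.mem_setOf_eq]
  rw [eval_charpoly']
  rw [det_arrow m x (((m:ℝ)+2+1)/((m:ℝ)+2)) (1/Real.sqrt (2*((m:ℝ)+2))) (x - 3/2) hc]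
  · have hs : Real.sqrt (2*((m:ℝ)+2)) ^ 2 = 2*((m:ℝ)+2) :=
      Real.sq_sqrt (by positivity)
    have hs0 : Real.sqrt (2*((m:ℝ)+2)) ≠ 0 := by positivity
    simp only [eval_mul, eval_pow, eval_sub, eval_C, eval_X, eval_ofNat]
    have h22 : m + 2 - 2 = m := by omega
    rw [h22, hnn, div_pow, one_pow, hs]
    have hm2 : ((m:ℝ)+2) ≠ 0 := by positivity
    rw [pow_succ]
    have key : (x - 3/2) * ((x - ((m:ℝ)+2+1)/((m:ℝ)+2)) - ((m:ℝ)+1) * (1/(2*((m:ℝ)+2)))/(x-3/2))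
        = (x-2) * (x - ((m:ℝ)+2+2)/(2*((m:ℝ)+2))) := by
      have h1 : (x - 3/2) * (((m:ℝ)+1) * (1/(2*((m:ℝ)+2)))/(x-3/2))
          = ((m:ℝ)+1) * (1/(2*((m:ℝ)+2))) := by
        rw [mul_comm, div_mul_cancel₀ _ hc]
      rw [mul_sub, h1]
      field_simp
      ring
    calc (x - 3/2) ^ m * (x - 3/2) * (x - ((m:ℝ)+2+1)/((m:ℝ)+2) - ((m:ℝ)+1) * (1/(2*((m:ℝ)+2)))/(x-3/2))
        = (x - 3/2) ^ m * ((x - 3/2) * ((x - ((m:ℝ)+2+1)/((m:ℝ)+2)) - ((m:ℝ)+1) * (1/(2*((m:ℝ)+2)))/(x-3/2))) := by ring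
      _ = (x - 3/2) ^ m * ((x-2) * (x - ((m:ℝ)+2+2)/(2*((m:ℝ)+2)))) := by rw [key]
      _ = (x - 2) * (x - 3/2) ^ m * (x - ((m:ℝ)+2+2)/(2*((m:ℝ)+2))) := by ring
  · intro i j
    rw [hM]
    simp only [Matrix.sub_apply, Matrix.smul_apply, Matrix.one_apply, Matrix.of_apply, hnn]
    by_cases h : i = j
    · subst h
      simp only [if_pos rfl, smul_eq_mul, mul_one]
      by_cases h0 : (i:ℕ) = 0 <;> simp [h0]
    · simp only [if_neg h, smul_eq_mul, mul_zero, zero_sub]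
      by_cases h0 : (i:ℕ) = 0 ∨ (j:ℕ) = 0
      · rw [if_pos h0, if_pos h0, neg_div, neg_neg]
      · rw [if_neg h0, if_neg h0, neg_zero]
end

section
/- Let M be the n×n matrix with M(1,1)=n-1, M(1,j)=M(j,1)=-1 for j≥2, diagonal entries M(j,j) ∈ {1,3} for j≥2 with exactly r-1 of them equal to 1 (so n-r-1 equal to 3, where 2 ≤ r ≤ n-1), and all other entries 0. Then the characteristic polynomial of M is [λ³ - (n+3)λ² + 3nλ + 2r - 2n]·(λ-1)^(r-2)·(λ-3)^(n-r-1). -/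
/-!
Taking the Schur complement of the diagonal block of `x • 1 - M` gives, for `x ∉ {1, 3}`, the
secular equation
`Φ(M, x) = (x - 1)^(r-1) (x - 3)^(n-r) (x - (n - 1) - (r - 1)/(x - 1) - (n - r)/(x - 3))`,
and clearing denominators yields the cubic factor. Two real polynomials agreeing at all but
finitely many points are equal.
-/

open Polynomial Matrix Finset

theorem det_arrowhead {K ι : Type*} [Field K] [Fintype ι] [DecidableEq ι]
    (A : Matrix ι ι K) (i₀ : ι)
    (hA : ∀ i j, i ≠ i₀ → j ≠ i₀ → i ≠ j → A i j = 0) (hdiag : ∀ i, i ≠ i₀ → A i i ≠ 0) :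
    A.det = (∏ i ∈ univ.erase i₀, A i i) *
      (A i₀ i₀ - ∑ i ∈ univ.erase i₀, A i₀ i * A i i₀ / A i i) := by
  set e := Equiv.sumCompl (· = i₀)
  set D : Matrix {i // i ≠ i₀} {i // i ≠ i₀} K := diagonal fun i => A i i
  have hD : (A.submatrix e e).toBlocks₂₂ = D := by
    ext i j
    rcases eq_or_ne i j with rfl | hij
    · simp [D, toBlocks₂₂, e]
    · simp [D, toBlocks₂₂, e, hij, hA i j i.2 j.2 (Subtype.val_injective.ne hij)]
  have : Invertible D := D.invertibleOfIsUnitDet (by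
    simpa [D, det_diagonal, prod_ne_zero_iff] using fun i hi => hdiag i hi)
  have hDinv : ⅟D = diagonal fun i : {i // i ≠ i₀} => (A i i)⁻¹ := by
    refine invOf_eq_right_inv ?_
    rw [diagonal_mul_diagonal, ← diagonal_one]
    exact congrArg diagonal (funext fun i => mul_inv_cancel₀ (hdiag i i.2))
  have h₀ : ((default : {a // a = i₀}) : ι) = i₀ := (default : {a // a = i₀}).prop
  have herase : ∀ i, i ∈ univ.erase i₀ ↔ i ≠ i₀ := by simp
  rw [← det_submatrix_equiv_self e, ← fromBlocks_toBlocks (A.submatrix e e), hD,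
    det_fromBlocks₂₂, hDinv, det_diagonal, det_unique (A := _ - _),
    prod_subtype (F := inferInstance) _ herase, sum_subtype (F := inferInstance) _ herase,
    Matrix.sub_apply, mul_apply]
  simp only [mul_diagonal, toBlocks₁₁, toBlocks₁₂, toBlocks₂₁, of_apply, submatrix_apply, e,
    Equiv.sumCompl_apply_inl, Equiv.sumCompl_apply_inr, h₀]
  simp only [div_eq_mul_inv, mul_right_comm]

@[to_additive]
theorem prod_comp_of_forall_eq_or_eq {ι α M : Type*} [CommMonoid M] [DecidableEq α]
    (s : Finset ι) (d : ι → α) {p q : α} (hd : ∀ i ∈ s, d i = p ∨ d i = q) (f : α → M) :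
    ∏ i ∈ s, f (d i) = f p ^ #(s.filter (d · = p)) * f q ^ #(s.filter (d · ≠ p)) := by
  rw [← prod_filter_mul_prod_filter_not s (d · = p), ← prod_const, ← prod_const]
  congr 1 <;> refine prod_congr rfl fun i hi => congrArg f ?_ <;> rw [mem_filter] at hi
  exacts [hi.2, (hd i hi.1).resolve_left hi.2]

theorem Fin.univ_erase_mk_zero (n : ℕ) (hn : 0 < n) :
    univ.erase (⟨0, hn⟩ : Fin n) = univ.filter (·.val ≠ 0) := by
  ext j
  simp [Fin.ext_iff]

def arrowheadLS (K : Type*) [Field K] (n : ℕ) (d : Fin n → K) : Matrix (Fin n) (Fin n) K :=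
  of fun i j =>
    if i = j then (if i.val = 0 then (n : K) - 1 else d i)
    else if i.val = 0 ∨ j.val = 0 then -1 else 0

theorem eval_charpoly_arrowheadLS {K : Type*} [Field K] {n : ℕ} (hn : 0 < n) (d : Fin n → K)
    {x : K} (hx : ∀ j : Fin n, j.val ≠ 0 → x ≠ d j) :
    (arrowheadLS K n d).charpoly.eval x =
      (∏ j ∈ univ.filter (·.val ≠ 0), (x - d j)) *
        (x - (n - 1) - ∑ j ∈ univ.filter (·.val ≠ 0), 1 / (x - d j)) := by
  set i₀ : Fin n := ⟨0, hn⟩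
  have hi₀ : ∀ j : Fin n, j ≠ i₀ ↔ j.val ≠ 0 := fun j => Fin.ext_iff.not
  set A := scalar (Fin n) x - arrowheadLS K n d
  have hcorner : A i₀ i₀ = x - (n - 1) := by simp [A, arrowheadLS, i₀]
  have hdiag : ∀ j, j ≠ i₀ → A j j = x - d j := fun j hj => by
    simp [A, arrowheadLS, (hi₀ j).1 hj]
  have hborder : ∀ j, j ≠ i₀ → A i₀ j * A j i₀ = 1 := fun j hj => by
    simp [A, arrowheadLS, i₀, (hi₀ j).1 hj, hj, hj.symm, diagonal_apply_ne]
  have hoff : ∀ i j, i ≠ i₀ → j ≠ i₀ → i ≠ j → A i j = 0 := fun i j hi hj hij => by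
    simp [A, arrowheadLS, hij, (hi₀ i).1 hi, (hi₀ j).1 hj]
  have hdiag_ne : ∀ j, j ≠ i₀ → A j j ≠ 0 := fun j hj => by
    rw [hdiag j hj, sub_ne_zero]
    exact hx j ((hi₀ j).1 hj)
  rw [← Fin.univ_erase_mk_zero n hn, eval_charpoly, det_arrowhead A i₀ hoff hdiag_ne, hcorner,
    prod_congr rfl fun j hj => hdiag j (ne_of_mem_erase hj),
    sum_congr rfl fun j hj => by rw [hborder j (ne_of_mem_erase hj), hdiag j (ne_of_mem_erase hj)]]

theorem secular_cubic_identity {K : Type*} [Field K] {n r : ℕ} (hr : 2 ≤ r) (hrn : r ≤ n - 1)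
    {x : K} (hx1 : x ≠ 1) (hx3 : x ≠ 3) :
    (x - 1) ^ (r - 1) * (x - 3) ^ (n - r) *
        (x - (n - 1) - ((r - 1 : ℕ) • (1 / (x - 1)) + (n - r : ℕ) • (1 / (x - 3)))) =
      (x ^ 3 - (n + 3) * x ^ 2 + 3 * n * x + (2 * r - 2 * n)) *
        (x - 1) ^ (r - 2) * (x - 3) ^ (n - r - 1) := by
  obtain ⟨a, rfl⟩ : ∃ a, r = a + 2 := ⟨r - 2, by omega⟩
  obtain ⟨b, rfl⟩ : ∃ b, n = a + b + 3 := ⟨n - a - 3, by omega⟩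
  have hx1' : x - 1 ≠ 0 := sub_ne_zero.2 hx1
  have hx3' : x - 3 ≠ 0 := sub_ne_zero.2 hx3
  simp only [show a + 2 - 1 = a + 1 by omega, show a + b + 3 - (a + 2) = b + 1 by omega,
    show a + 2 - 2 = a by omega, nsmul_eq_mul]
  push_cast
  field_simp
  ring

/-- Characteristic polynomial of the arrowhead matrix `L_S` (case `11' ∉ E`): first
row/column `(n-1, -1, …, -1)`, remaining diagonal entries in `{1, 3}` with exactly
`r-1` of them equal to `1`, other entries `0`.  Then
`Φ(M, λ) = [λ³ - (n+3)λ² + 3nλ + 2r - 2n]·(λ-1)^(r-2)·(λ-3)^(n-r-1)`. -/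
theorem charpoly_LS_case1 (n r : ℕ) (hn : 3 ≤ n) (hr : 2 ≤ r) (hrn : r ≤ n - 1)
    (d : Fin n → ℝ)
    (hd : ∀ j : Fin n, j.val ≠ 0 → d j = 1 ∨ d j = 3)
    (hcard : (Finset.univ.filter (fun j : Fin n => j.val ≠ 0 ∧ d j = 1)).card = r - 1)
    (M : Matrix (Fin n) (Fin n) ℝ)
    (hM : M = Matrix.of fun i j =>
      if i = j then (if i.val = 0 then (n : ℝ) - 1 else d i)
      else if i.val = 0 ∨ j.val = 0 then -1 else 0) :
    M.charpoly =
      (X ^ 3 - C ((n : ℝ) + 3) * X ^ 2 + C (3 * (n : ℝ)) * X + C (2 * (r : ℝ) - 2 * n)) *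
        (X - 1) ^ (r - 2) * (X - 3) ^ (n - r - 1) := by
  obtain rfl : M = arrowheadLS ℝ n d := hM
  set s := univ.filter fun j : Fin n => j.val ≠ 0
  have hds : ∀ j ∈ s, d j = 1 ∨ d j = 3 := fun j hj => hd j (mem_filter.1 hj).2
  have hones : #(s.filter (d · = 1)) = r - 1 := by rw [filter_filter]; exact hcard
  have hthrees : #(s.filter (d · ≠ 1)) = n - r := by
    have hs : #s = n - 1 := by
      simp only [s, ← Fin.univ_erase_mk_zero n (by omega), card_erase_of_mem (mem_univ _),
        card_fin]
    have := card_filter_add_card_filter_not (s := s) (d · = 1)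
    simp only [← ne_eq] at this
    omega
  apply eq_of_infinite_eval_eq
  refine ((Set.finite_singleton 1).insert 3).infinite_compl.mono fun x hx => ?_
  simp only [Set.mem_compl_iff, Set.mem_insert_iff, Set.mem_singleton_iff, not_or] at hx
  have hxd : ∀ j : Fin n, j.val ≠ 0 → x ≠ d j := fun j hj => by
    rcases hd j hj with h | h <;> rw [h] <;> tauto
  rw [Set.mem_ofPred_eq, eval_charpoly_arrowheadLS (by omega) d hxd,
    prod_comp_of_forall_eq_or_eq s d hds (x - ·),
    sum_comp_of_forall_eq_or_eq s d hds (fun y => 1 / (x - y)), hones, hthrees,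
    secular_cubic_identity hr hrn hx.2 hx.1]
  simp
end
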